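/- Let v, w be words over a finite alphabet A such that v respects the transition to w, v is not a suffix of w, and w is not a prefix of v. Then for every word u and every m, the map S ↦ R_u^{v→w}(S) is injective on the collection of m-element subsets of O_v(u). -/

import Mathlib

/-- `v` occurs in `u` at position `i`, i.e. `u_{[i, i+|v|)} = v`. -/
def occursAt {A : Type*} (v u : List A) (i : ℕ) : Prop :=
  (u.drop i).take v.length = v

/-- `O_v(u)`: the set of positions at which `v` occurs in `u`. -/
def occSet {A : Type*} (v u : List A) : Set ℕ := {i | occursAt v u i}

/-- `O_v(u)` viewed as a subset of `ℤ`. -/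
def occSetZ {A : Type*} (v u : List A) : Set ℤ :=
  {i | ∃ k : ℕ, (k : ℤ) = i ∧ occursAt v u k}

/-- `R_u^{v→w}(i)`: replace the occurrence of `v` at position `i` in `u` by `w`. -/
def replaceAt {A : Type*} (v w u : List A) (i : ℕ) : List A :=
  u.take i ++ w ++ u.drop (i + v.length)

/-- Sequential replacement of `v` by `w` at a list of positions (given in the coordinates
of the original word; after each replacement the remaining positions shift by `|w| - |v|`):
`u¹ = u`, `u^{r+1} = R_{uʳ}^{v→w}(s_r + (r-1)(|w|-|v|))`. -/
def seqReplace {A : Type*} (v w : List A) : List A → List ℤ → List A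
  | u, [] => u
  | u, s :: rest =>
      seqReplace v w (replaceAt v w u s.toNat)
        (rest.map (· + ((w.length : ℤ) - (v.length : ℤ))))
  termination_by _ l => l.length
  decreasing_by simp [List.length_map]

/-- `R_u^{v→w}(S)`: replace `v` by `w` at all positions of `S`, from left to right. -/
def replaceSet {A : Type*} (v w u : List A) (S : Finset ℕ) : List A :=
  seqReplace v w u ((S.sort (· ≤ ·)).map (fun k : ℕ => (k : ℤ)))

/-- `v` respects the transition to `w` (conditions (i)-(iv)). -/
def Respects {A : Type*} (v w : List A) : Prop :=
  ∀ u : List A, ∀ i ∈ occSet v u,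
    (∀ j ∈ occSet v u, i < j →
      ((j : ℤ) + (w.length : ℤ) - (v.length : ℤ)) ∈ occSetZ v (replaceAt v w u i)) ∧
    (∀ j ∈ occSet v u, j < i → j ∈ occSet v (replaceAt v w u i)) ∧
    (∀ j ∈ occSet w u, j < i → j ∈ occSet w (replaceAt v w u i)) ∧
    (∀ j ∈ occSet v u, i < j → (i : ℤ) < (j : ℤ) + (w.length : ℤ) - (v.length : ℤ))

/-!
Write `d = |w| - |v|`. Replacements at increasing positions can be tracked: an occurrence of
`v` or `w` to the left of every replaced position survives (conditions (ii)-(iv)), and an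
occurrence of `v` to the right of all of them survives, moved by `d` per replacement
(condition (i)). Suppose two sorted position lists of equal length give the same word.
If `|w| ≤ |v|` and their least positions are `a < b`, the first list leaves `w` at `a` while the
second leaves `v` there, so `w` is a prefix of `v`. If `|v| ≤ |w|` and their greatest positions
are `M < N`, the last replacement of the second list writes `w` at some `k`, while the first
list moves the occurrence of `v` at `N` to `k + d`, so `v` is a suffix of `w`. Hence the extreme
positions agree, and peeling them off gives injectivity by induction.
-/

section

variable {A : Type*} {v w u : List A}

theorem occursAt.add_length_le (hv : v ≠ []) {i : ℕ} (h : occursAt v u i) :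
    i + v.length ≤ u.length := by
  have hlen := congrArg List.length h
  simp only [List.length_take, List.length_drop] at hlen
  have := List.length_pos_iff.mpr hv
  omega

theorem occursAt.eq_take_append_drop {i : ℕ} (h : occursAt v u i) :
    u = u.take i ++ v ++ u.drop (i + v.length) := by
  conv_lhs => rw [← List.take_append_drop i u, ← List.take_append_drop v.length (u.drop i), h,
    List.drop_drop]
  rw [List.append_assoc]

theorem occursAt_replaceAt_self {i : ℕ} (hi : i ≤ u.length) :
    occursAt w (replaceAt v w u i) i := by
  rw [occursAt, replaceAt, List.append_assoc, List.drop_left' (by simp [hi]),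
    List.take_left' rfl]

theorem eq_of_replaceAt_eq (hv : v ≠ []) {a b : List A} {i : ℕ} (ha : occursAt v a i)
    (hb : occursAt v b i) (h : replaceAt v w a i = replaceAt v w b i) : a = b := by
  have hai := ha.add_length_le hv
  have hbi := hb.add_length_le hv
  obtain ⟨hpre, hsuf⟩ := List.append_inj h (by simp; omega)
  rw [ha.eq_take_append_drop, hb.eq_take_append_drop, (List.append_inj hpre (by simp; omega)).1,
    hsuf]

theorem isPrefix_of_occursAt {x y Z : List A} {i : ℕ} (hx : occursAt x Z i)
    (hy : occursAt y Z i) (hle : x.length ≤ y.length) : x <+: y := by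
  have : y.take x.length = x := by
    calc y.take x.length = ((Z.drop i).take y.length).take x.length := by rw [hy]
      _ = x := by rw [List.take_take, min_eq_left hle]; exact hx
  exact this ▸ List.take_prefix _ _

theorem isSuffix_of_occursAt {x y Z : List A} {i : ℕ} (hx : occursAt x Z i)
    (hy : occursAt y Z (i + (x.length - y.length))) (hle : y.length ≤ x.length) : y <:+ x := by
  have : x.drop (x.length - y.length) = y := by
    calc x.drop (x.length - y.length)
        = ((Z.drop i).take x.length).drop (x.length - y.length) := by rw [hx]
      _ = y := by rw [List.drop_take, List.drop_drop, Nat.sub_sub_self hle]; exact hy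
  exact this ▸ List.drop_suffix _ _

theorem seqReplace_induction {motive : List A → List ℤ → Prop} (nil : ∀ u, motive u [])
    (cons : ∀ u s l, motive (replaceAt v w u s.toNat)
      (l.map (· + ((w.length : ℤ) - (v.length : ℤ)))) → motive u (s :: l))
    (u : List A) (l : List ℤ) : motive u l :=
  seqReplace.induct v w motive nil (fun u s l ih => cons u s l (by simpa using ih)) u l

theorem seqReplace_cons (s : ℤ) (l : List ℤ) :
    seqReplace v w u (s :: l) =
      seqReplace v w (replaceAt v w u s.toNat)
        (l.map (· + ((w.length : ℤ) - (v.length : ℤ)))) := by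
  rw [seqReplace]

theorem seqReplace_append_singleton (l : List ℤ) (s : ℤ) :
    seqReplace v w u (l ++ [s]) =
      replaceAt v w (seqReplace v w u l)
        (s + l.length * ((w.length : ℤ) - (v.length : ℤ))).toNat := by
  induction u, l using seqReplace_induction (v := v) (w := w) generalizing s with
  | nil u => simp [seqReplace]
  | cons u x l ih =>
    rw [List.cons_append, seqReplace_cons, List.map_append, List.map_singleton, ih,
      seqReplace_cons, List.length_map, List.length_cons]
    congr 2
    push_cast
    ring

namespace Respects

variable (h : Respects v w) {s x : ℤ}
include h

theorem lt_add (hs : s ∈ occSetZ v u) (hx : x ∈ occSetZ v u) (hsx : s < x) :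
    s < x + ((w.length : ℤ) - (v.length : ℤ)) := by
  obtain ⟨i, rfl, hi⟩ := hs
  obtain ⟨j, rfl, hj⟩ := hx
  have := (h u i hi).2.2.2 j hj (by omega)
  omega

theorem add_mem_occSetZ (hs : s ∈ occSetZ v u) (hx : x ∈ occSetZ v u) (hsx : s < x) :
    x + ((w.length : ℤ) - (v.length : ℤ)) ∈ occSetZ v (replaceAt v w u s.toNat) := by
  obtain ⟨i, rfl, hi⟩ := hs
  obtain ⟨j, rfl, hj⟩ := hx
  rw [← add_sub_assoc, Int.toNat_natCast]
  exact (h u i hi).1 j hj (by omega)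

end Respects

def SortedOccurrences (v u : List A) (l : List ℤ) : Prop :=
  l.Pairwise (· < ·) ∧ ∀ x ∈ l, x ∈ occSetZ v u

namespace SortedOccurrences

theorem tail (h : Respects v w) {s : ℤ} {l : List ℤ} (hl : SortedOccurrences v u (s :: l)) :
    SortedOccurrences v (replaceAt v w u s.toNat)
      (l.map (· + ((w.length : ℤ) - (v.length : ℤ)))) := by
  obtain ⟨hsort, hocc⟩ := hl
  rw [List.pairwise_cons] at hsort
  refine ⟨List.pairwise_map.2 (hsort.2.imp fun hab => by omega), ?_⟩
  simp only [List.mem_map]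
  rintro _ ⟨x, hx, rfl⟩
  exact h.add_mem_occSetZ (hocc s List.mem_cons_self) (hocc x (List.mem_cons_of_mem _ hx))
    (hsort.1 x hx)

theorem lt_add_of_mem_tail (h : Respects v w) {s : ℤ} {l : List ℤ}
    (hl : SortedOccurrences v u (s :: l)) :
    ∀ y ∈ l.map (· + ((w.length : ℤ) - (v.length : ℤ))), s < y := by
  simp only [List.mem_map]
  rintro _ ⟨x, hx, rfl⟩
  exact h.lt_add (hl.2 s List.mem_cons_self) (hl.2 x (List.mem_cons_of_mem _ hx))
    ((List.pairwise_cons.1 hl.1).1 x hx)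

theorem of_append_singleton {l : List ℤ} {s : ℤ} (hl : SortedOccurrences v u (l ++ [s])) :
    SortedOccurrences v u l ∧ ∀ x ∈ l, x < s := by
  obtain ⟨hsort, hocc⟩ := hl
  rw [List.pairwise_append] at hsort
  exact ⟨⟨hsort.1, fun x hx => hocc x (List.mem_append_left _ hx)⟩,
    fun x hx => hsort.2.2 x hx s List.mem_cons_self⟩

end SortedOccurrences

theorem occursAt_seqReplace_of_lt (h : Respects v w) {x : List A}
    (hstep : ∀ u, ∀ i ∈ occSet v u, ∀ j ∈ occSet x u, j < i → j ∈ occSet x (replaceAt v w u i))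
    {l : List ℤ} (hl : SortedOccurrences v u l) {j : ℕ} (hj : occursAt x u j)
    (hjl : ∀ y ∈ l, (j : ℤ) < y) : occursAt x (seqReplace v w u l) j := by
  induction u, l using seqReplace_induction (v := v) (w := w) with
  | nil u => rwa [seqReplace]
  | cons u s l ih =>
    have hjs := hjl s List.mem_cons_self
    obtain ⟨i, rfl, hi⟩ := hl.2 s List.mem_cons_self
    rw [seqReplace_cons]
    refine ih (hl.tail h) (by simpa [occSet] using hstep u i hi j hj (by omega)) fun y hy => ?_
    have := hl.lt_add_of_mem_tail h y hy
    omega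

theorem occursAt_seqReplace_cons (hv : v ≠ []) (h : Respects v w) {s : ℤ} {l : List ℤ}
    (hl : SortedOccurrences v u (s :: l)) : occursAt w (seqReplace v w u (s :: l)) s.toNat := by
  obtain ⟨i, rfl, hi⟩ := hl.2 s List.mem_cons_self
  rw [seqReplace_cons]
  refine occursAt_seqReplace_of_lt h (fun u i hi j hj hji => (h u i hi).2.2.1 j hj hji) (hl.tail h)
    (occursAt_replaceAt_self (by have := hi.add_length_le hv; omega)) fun y hy => ?_
  simpa using hl.lt_add_of_mem_tail h y hy

theorem add_mem_occSetZ_seqReplace (h : Respects v w) {l : List ℤ}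
    (hl : SortedOccurrences v u l) {j : ℤ} (hj : j ∈ occSetZ v u) (hlj : ∀ y ∈ l, y < j) :
    j + l.length * ((w.length : ℤ) - (v.length : ℤ)) ∈ occSetZ v (seqReplace v w u l) := by
  induction u, l using seqReplace_induction (v := v) (w := w) generalizing j with
  | nil u => simpa [seqReplace] using hj
  | cons u s l ih =>
    have hsj := hlj s List.mem_cons_self
    have hj' := h.add_mem_occSetZ (hl.2 s List.mem_cons_self) hj hsj
    rw [seqReplace_cons]
    convert ih (hl.tail h) hj' (fun y hy => ?_) using 1
    · simp only [List.length_cons, List.length_map]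
      push_cast
      ring
    · simp only [List.mem_map] at hy
      obtain ⟨x, hx, rfl⟩ := hy
      have := hlj x (List.mem_cons_of_mem _ hx)
      omega

theorem head_eq_of_seqReplace_eq (h : Respects v w) (hpre : ¬ w <+: v)
    (hle : w.length ≤ v.length) {a b : ℤ} {l₁ l₂ : List ℤ}
    (h₁ : SortedOccurrences v u (a :: l₁)) (h₂ : SortedOccurrences v u (b :: l₂))
    (heq : seqReplace v w u (a :: l₁) = seqReplace v w u (b :: l₂)) : a = b := by
  have hv : v ≠ [] := by
    rintro rfl
    exact hpre (by simp_all)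
  by_contra hne
  wlog hab : a < b generalizing a b l₁ l₂
  · exact this h₂ h₁ heq.symm (Ne.symm hne) (by omega)
  obtain ⟨i, rfl, hi⟩ := h₁.2 a List.mem_cons_self
  have hw := occursAt_seqReplace_cons hv h h₁
  have hv' : occursAt v (seqReplace v w u (b :: l₂)) i := by
    refine occursAt_seqReplace_of_lt h (fun u i hi j hj hji => (h u i hi).2.1 j hj hji) h₂ hi ?_
    rintro y (_ | ⟨_, hy⟩)
    · exact hab
    · exact hab.trans ((List.pairwise_cons.1 h₂.1).1 y hy)
  rw [← heq] at hv'
  exact hpre (isPrefix_of_occursAt hw hv' hle)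

theorem getLast_eq_of_seqReplace_eq (h : Respects v w) (hsuf : ¬ v <:+ w)
    (hle : v.length ≤ w.length) {M N : ℤ} {l₁ l₂ : List ℤ}
    (h₁ : SortedOccurrences v u (l₁ ++ [M])) (h₂ : SortedOccurrences v u (l₂ ++ [N]))
    (hlen : l₁.length = l₂.length)
    (heq : seqReplace v w u (l₁ ++ [M]) = seqReplace v w u (l₂ ++ [N])) : M = N := by
  have hv : v ≠ [] := by
    rintro rfl
    exact hsuf List.nil_suffix
  by_contra hne
  wlog hMN : M < N generalizing M N l₁ l₂
  · exact this h₂ h₁ hlen.symm heq.symm (Ne.symm hne) (by omega)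
  obtain ⟨h₁', hlt₁⟩ := h₁.of_append_singleton
  obtain ⟨h₂', hlt₂⟩ := h₂.of_append_singleton
  have hN := h₂.2 N (List.mem_append_right _ List.mem_cons_self)
  obtain ⟨k, hk, hvk⟩ := add_mem_occSetZ_seqReplace h h₂' hN hlt₂
  have hw : occursAt w (seqReplace v w u (l₂ ++ [N])) k := by
    rw [seqReplace_append_singleton, ← hk, Int.toNat_natCast]
    exact occursAt_replaceAt_self (by have := hvk.add_length_le hv; omega)
  -- the occurrence of `v` at `N` lies to the right of every replaced position of `l₁ ++ [M]`
  obtain ⟨k', hk', hvk'⟩ := add_mem_occSetZ_seqReplace h h₁ hN (by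
    rintro y hy
    rcases List.mem_append.1 hy with hy | hy
    · exact (hlt₁ y hy).trans hMN
    · exact (List.mem_singleton.1 hy) ▸ hMN)
  have hk'k : k' = k + (w.length - v.length) := by
    zify [hle]
    rw [hk', List.length_append, List.length_singleton, hlen, hk]
    push_cast
    ring
  rw [heq, hk'k] at hvk'
  exact hsuf (isSuffix_of_occursAt hw hvk' hle)

theorem eq_of_seqReplace_eq_of_length_le (h : Respects v w) (hpre : ¬ w <+: v)
    (hle : w.length ≤ v.length) {l₁ l₂ : List ℤ} (h₁ : SortedOccurrences v u l₁)
    (h₂ : SortedOccurrences v u l₂) (hlen : l₁.length = l₂.length)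
    (heq : seqReplace v w u l₁ = seqReplace v w u l₂) : l₁ = l₂ := by
  induction u, l₁ using seqReplace_induction (v := v) (w := w) generalizing l₂ with
  | nil u => exact (List.length_eq_zero_iff.1 hlen.symm).symm
  | cons u a l₁ ih =>
    obtain _ | ⟨b, l₂⟩ := l₂
    · simp at hlen
    obtain rfl := head_eq_of_seqReplace_eq h hpre hle h₁ h₂ heq
    rw [seqReplace_cons, seqReplace_cons] at heq
    have := ih (h₁.tail h) (h₂.tail h) (by simpa using hlen) heq
    rw [List.map_injective_iff.2 (add_left_injective _) this]

theorem eq_of_seqReplace_eq_of_le_length (h : Respects v w) (hsuf : ¬ v <:+ w)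
    (hle : v.length ≤ w.length) {l₁ l₂ : List ℤ} (h₁ : SortedOccurrences v u l₁)
    (h₂ : SortedOccurrences v u l₂) (hlen : l₁.length = l₂.length)
    (heq : seqReplace v w u l₁ = seqReplace v w u l₂) : l₁ = l₂ := by
  have hv : v ≠ [] := by
    rintro rfl
    exact hsuf List.nil_suffix
  induction l₁ using List.reverseRecOn generalizing l₂ with
  | nil => exact (List.length_eq_zero_iff.1 hlen.symm).symm
  | append_singleton l₁ M ih =>
    obtain rfl | ⟨l₂, N, rfl⟩ := l₂.eq_nil_or_concat
    · simp at hlen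
    rw [List.concat_eq_append] at h₂ hlen heq ⊢
    have hlen' : l₁.length = l₂.length := by simpa using hlen
    obtain rfl := getLast_eq_of_seqReplace_eq h hsuf hle h₁ h₂ hlen' heq
    obtain ⟨h₁', hlt₁⟩ := h₁.of_append_singleton
    obtain ⟨h₂', hlt₂⟩ := h₂.of_append_singleton
    obtain ⟨k, hk, hv₁⟩ :=
      add_mem_occSetZ_seqReplace h h₁' (h₁.2 M (List.mem_append_right _ List.mem_cons_self)) hlt₁
    obtain ⟨k₂, hk₂, hv₂⟩ :=
      add_mem_occSetZ_seqReplace h h₂' (h₂.2 M (List.mem_append_right _ List.mem_cons_self)) hlt₂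
    obtain rfl : k = k₂ := by
      rw [hlen'] at hk
      exact_mod_cast hk.trans hk₂.symm
    rw [seqReplace_append_singleton, seqReplace_append_singleton, ← hk, ← hk₂,
      Int.toNat_natCast] at heq
    rw [ih h₁' h₂' hlen' (eq_of_replaceAt_eq hv hv₁ hv₂ heq)]

theorem eq_of_seqReplace_eq (h : Respects v w) (hsuf : ¬ v <:+ w) (hpre : ¬ w <+: v)
    {l₁ l₂ : List ℤ} (h₁ : SortedOccurrences v u l₁) (h₂ : SortedOccurrences v u l₂)
    (hlen : l₁.length = l₂.length) (heq : seqReplace v w u l₁ = seqReplace v w u l₂) :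
    l₁ = l₂ := by
  rcases le_total w.length v.length with hle | hle
  · exact eq_of_seqReplace_eq_of_length_le h hpre hle h₁ h₂ hlen heq
  · exact eq_of_seqReplace_eq_of_le_length h hsuf hle h₁ h₂ hlen heq

theorem sortedOccurrences_sort {S : Finset ℕ} (hS : ↑S ⊆ occSet v u) :
    SortedOccurrences v u ((S.sort (· ≤ ·)).map (fun k : ℕ => (k : ℤ))) := by
  refine ⟨List.pairwise_map.2 ((Finset.sortedLT_sort S).pairwise.imp (by exact_mod_cast ·)), ?_⟩
  simp only [List.mem_map, Finset.mem_sort]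
  rintro _ ⟨k, hk, rfl⟩
  exact ⟨k, rfl, hS hk⟩

end

theorem statement8_general {A : Type*} (v w : List A)
    (hresp : Respects v w) (hsuf : ¬ v <:+ w) (hpre : ¬ w <+: v)
    (u : List A) (m : ℕ) :
    Set.InjOn (replaceSet v w u) {S : Finset ℕ | ↑S ⊆ occSet v u ∧ S.card = m} := by
  rintro S ⟨hS, rfl⟩ T ⟨hT, hST⟩ heq
  have hsort : S.sort (· ≤ ·) = T.sort (· ≤ ·) :=
    List.map_injective_iff.2 Nat.cast_injective <|
      eq_of_seqReplace_eq hresp hsuf hpre (sortedOccurrences_sort hS) (sortedOccurrences_sort hT)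
        (by simp [hST]) heq
  rw [← Finset.sort_toFinset S (· ≤ ·), hsort, Finset.sort_toFinset]

/-- Lemma (injective): if `v` respects the transition to `w`, `v` is not a suffix of `w`,
and `w` is not a prefix of `v`, then for any `u` and `m`, `S ↦ R_u^{v→w}(S)` is injective
on `m`-element subsets of `O_v(u)`. -/
theorem statement8 {A : Type*} [Fintype A] (v w : List A)
    (hresp : Respects v w) (hsuf : ¬ v <:+ w) (hpre : ¬ w <+: v)
    (u : List A) (m : ℕ) :
    Set.InjOn (replaceSet v w u) {S : Finset ℕ | ↑S ⊆ occSet v u ∧ S.card = m} :=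
  statement8_general v w hresp hsuf hpre u m
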